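/- arXiv:1009.2230 — 5 statements merged into one kernel-verified Lean document; each statement's English description precedes it below -/
import Mathlib

section
/- Let N ≥ 1 be a real number, λ > 0, y₀ ∈ (0,1], and set β = λN. If m : [0,∞) → ℝ is differentiable with m(0) = N·y₀, 0 ≤ m(t) ≤ N for all t ≥ 0, and m'(t) ≤ λ·m(t)·(N − m(t)) for all t ≥ 0, then m(t) ≤ N·y₀ / (y₀ + (1−y₀)·exp(−βt)) for all t ≥ 0. -/
open Set Real

/-! The explicit curve `g(t) = N y₀ / (y₀ + (1 - y₀) e^{-λ N t})` solves the logistic equation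
`g' = λ g (N - g)` with `g(0) = N y₀`, and `m` is a subsolution of the same equation. Where `m > g > 0`
the logistic vector field satisfies the one-sided Lipschitz bound
`λ m (N - m) - λ g (N - g) = λ (m - g)(N - m - g) ≤ λ N (m - g)`, so the comparison principle for
scalar differential inequalities gives `m ≤ g`. -/

theorem le_of_deriv_sub_le_mul_sub {f f' g g' : ℝ → ℝ} {a b K : ℝ}
    (hf : ContinuousOn f (Icc a b)) (hf' : ∀ x ∈ Ico a b, HasDerivWithinAt f (f' x) (Ici x) x)
    (hg : ContinuousOn g (Icc a b)) (hg' : ∀ x ∈ Ico a b, HasDerivWithinAt g (g' x) (Ici x) x)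
    (ha : f a ≤ g a) (hfg : ∀ x ∈ Ico a b, g x < f x → f' x - g' x ≤ K * (f x - g x)) :
    ∀ ⦃x⦄, x ∈ Icc a b → f x ≤ g x := by
  -- `f - g` stays below every barrier `ε e^{(K+1)(x-a)}`, whose growth rate beats `K`.
  have barrier : ∀ ε > 0, ∀ ⦃x⦄, x ∈ Icc a b → f x - g x ≤ ε * exp ((K + 1) * (x - a)) := by
    intro ε hε
    have hB : ∀ x, HasDerivAt (fun x => ε * exp ((K + 1) * (x - a)))
        ((K + 1) * (ε * exp ((K + 1) * (x - a)))) x := fun x => by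
      have := (((hasDerivAt_id x).sub_const a).const_mul (K + 1)).exp.const_mul ε
      exact this.congr_deriv (by simp only [id]; ring)
    have hstart : (f - g) a ≤ ε * exp ((K + 1) * (a - a)) := by
      rw [Pi.sub_apply, sub_self, mul_zero, exp_zero, mul_one]
      linarith
    refine image_le_of_deriv_right_lt_deriv_boundary (hf.sub hg)
      (fun x hx => (hf' x hx).sub (hg' x hx)) hstart hB fun x hx hx_eq => ?_
    rw [Pi.sub_apply] at hx_eq
    have hpos : 0 < ε * exp ((K + 1) * (x - a)) := by positivity
    calc f' x - g' x ≤ K * (f x - g x) := hfg x hx (by linarith)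
      _ < (K + 1) * (ε * exp ((K + 1) * (x - a))) := by rw [hx_eq]; linarith
  intro x hx
  refine le_of_forall_pos_le_add fun δ hδ => ?_
  have := barrier (δ / exp ((K + 1) * (x - a))) (by positivity) hx
  rw [div_mul_cancel₀ _ (exp_pos _).ne'] at this
  linarith

noncomputable def logisticCurve (N lam y₀ t : ℝ) : ℝ :=
  N * y₀ / (y₀ + (1 - y₀) * exp (-(lam * N) * t))

theorem logisticCurve_zero (N lam y₀ : ℝ) : logisticCurve N lam y₀ 0 = N * y₀ := by
  simp [logisticCurve]

theorem add_one_sub_mul_exp_pos {y₀ : ℝ} (hy₀ : y₀ ∈ Ioc (0 : ℝ) 1) (s : ℝ) :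
    0 < y₀ + (1 - y₀) * exp s := by
  have : 0 ≤ (1 - y₀) * exp s := mul_nonneg (by linarith [hy₀.2]) (exp_pos s).le
  linarith [hy₀.1]

theorem logisticCurve_pos {N lam y₀ : ℝ} (hN : 0 < N) (hy₀ : y₀ ∈ Ioc (0 : ℝ) 1) (t : ℝ) :
    0 < logisticCurve N lam y₀ t :=
  div_pos (mul_pos hN hy₀.1) (add_one_sub_mul_exp_pos hy₀ _)

theorem hasDerivAt_logisticCurve {N lam y₀ t : ℝ}
    (ht : y₀ + (1 - y₀) * exp (-(lam * N) * t) ≠ 0) :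
    HasDerivAt (logisticCurve N lam y₀)
      (lam * logisticCurve N lam y₀ t * (N - logisticCurve N lam y₀ t)) t := by
  have hden := (((hasDerivAt_id t).const_mul (-(lam * N))).exp.const_mul (1 - y₀)).const_add y₀
  refine ((hasDerivAt_const t (N * y₀)).div hden ht).congr_deriv ?_
  simp only [logisticCurve, id]
  generalize exp (-(lam * N) * t) = E at ht ⊢
  field_simp
  ring

theorem logistic_field_sub_le {lam N a b : ℝ} (hlam : 0 ≤ lam) (hb : 0 ≤ b) (hba : b ≤ a) :
    lam * a * (N - a) - lam * b * (N - b) ≤ lam * N * (a - b) := by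
  have : 0 ≤ lam * ((a - b) * (a + b)) :=
    mul_nonneg hlam (mul_nonneg (by linarith) (by linarith))
  linarith

theorem stmt_1_general (N lam y₀ β : ℝ) (hN : 1 ≤ N) (hlam : 0 < lam)
    (hy₀ : y₀ ∈ Set.Ioc (0:ℝ) 1) (hβ : β = lam * N)
    (m m' : ℝ → ℝ)
    (hm : ∀ t, 0 ≤ t → HasDerivWithinAt m (m' t) (Set.Ici 0) t)
    (hm0 : m 0 = N * y₀)
    (hineq : ∀ t, 0 ≤ t → m' t ≤ lam * m t * (N - m t)) :
    ∀ t, 0 ≤ t → m t ≤ N * y₀ / (y₀ + (1 - y₀) * Real.exp (-β * t)) := by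
  subst hβ
  intro t ht
  set g := logisticCurve N lam y₀
  have hg : ∀ s, HasDerivAt g (lam * g s * (N - g s)) s := fun s =>
    hasDerivAt_logisticCurve (add_one_sub_mul_exp_pos hy₀ _).ne'
  refine le_of_deriv_sub_le_mul_sub (K := lam * N)
    (fun x hx => (hm x hx.1).continuousWithinAt.mono Icc_subset_Ici_self)
    (fun x hx => (hm x hx.1).mono (Ici_subset_Ici.2 hx.1))
    (fun x _ => (hg x).continuousAt.continuousWithinAt) (fun x _ => (hg x).hasDerivWithinAt)
    (by rw [hm0]; exact (logisticCurve_zero N lam y₀).ge) (fun x hx hgm => ?_) ⟨ht, le_rfl⟩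
  have hgx := logisticCurve_pos (lt_of_lt_of_le one_pos hN) hy₀ (lam := lam) x
  linarith [hineq x hx.1, logistic_field_sub_le (N := N) hlam.le hgx.le hgm.le]

/-- Comparison bound: if `m(0) = N y₀`, `0 ≤ m ≤ N` and `m' ≤ λ m (N − m)` on `[0, ∞)`,
then `m(t) ≤ N y₀ / (y₀ + (1 − y₀) exp(−βt))` where `β = λ N`. -/
theorem stmt_1 (N lam y₀ β : ℝ) (hN : 1 ≤ N) (hlam : 0 < lam)
    (hy₀ : y₀ ∈ Set.Ioc (0:ℝ) 1) (hβ : β = lam * N)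
    (m m' : ℝ → ℝ)
    (hm : ∀ t, 0 ≤ t → HasDerivWithinAt m (m' t) (Set.Ici 0) t)
    (hm0 : m 0 = N * y₀)
    (hlb : ∀ t, 0 ≤ t → 0 ≤ m t) (hub : ∀ t, 0 ≤ t → m t ≤ N)
    (hineq : ∀ t, 0 ≤ t → m' t ≤ lam * m t * (N - m t)) :
    ∀ t, 0 ≤ t → m t ≤ N * y₀ / (y₀ + (1 - y₀) * Real.exp (-β * t)) :=
  stmt_1_general N lam y₀ β hN hlam hy₀ hβ m m' hm hm0 hineq
end

section
/- Let β > 0, μ > 0, θ = β/μ, and let y, x_c : [0,∞) → ℝ be differentiable with y(0) = y₀ ∈ (0,1), x_c(0) = x_{c,0} ∈ (0,1), satisfying y' = y(β·x_c − μ) and x_c' = −β·y·x_c on [0,∞), with y(t) > 0 and x_c(t) > 0 for all t. Then as t → ∞, y(t) → 0 and x_c(t) converges to the unique solution x_c(∞) in (0, x_{c,0}) of the equation x − θ^{−1}·log x = x_{c,0} + y₀ − θ^{−1}·log(x_{c,0}). -/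
open Filter Set Topology

/-!
The quantity `β (y + x_c) - μ log x_c` is a first integral of the system. Since `x_c` decreases
and, by the first integral, `log x_c` stays bounded below, `x_c` converges to some `L > 0`; the
first integral then forces `y` to converge as well. As `(log x_c)' = -β y`, a nonzero limit of `y`
would drive `log x_c` to `-∞`, so `y → 0`, and passing to the limit in the first integral gives the
equation for `L`. That equation has only one root in `(0, x_{c,0})` because `x - θ⁻¹ log x` is
convex and takes a smaller value at `x_{c,0}` than at the root.
-/

theorem ConvexOn.injOn_of_lt {𝕜 β : Type*} [Field 𝕜] [LinearOrder 𝕜] [IsStrictOrderedRing 𝕜]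
    [AddCommMonoid β] [LinearOrder β] [IsOrderedCancelAddMonoid β] [Module 𝕜 β]
    [PosSMulStrictMono 𝕜 β] {s : Set 𝕜} {f : 𝕜 → β} {c : 𝕜} (hf : ConvexOn 𝕜 s f) (hc : c ∈ s) :
    InjOn f {x | x ∈ s ∧ x < c ∧ f c < f x} := by
  have key : ∀ ⦃x y⦄, x ∈ s → y < c → f c < f y → x < y → f y < f x :=
    fun x y hx hyc hfy hxy => hf.lt_left_of_right_lt hx hc (Ioo_subset_openSegment ⟨hxy, hyc⟩) hfy
  intro x ⟨hx, hxc, hfx⟩ y ⟨hy, hyc, hfy⟩ hfxy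
  rcases lt_trichotomy x y with hxy | rfl | hyx
  · exact absurd hfxy (key hx hyc hfy hxy).ne'
  · rfl
  · exact absurd hfxy (key hy hxc hfx hyx).ne

theorem convexOn_sub_mul_log {k : ℝ} (hk : 0 ≤ k) :
    ConvexOn ℝ (Ioi 0) fun x => x - k * Real.log x :=
  (convexOn_id (convex_Ioi 0)).sub (strictConcaveOn_log_Ioi.concaveOn.smul hk)

theorem AntitoneOn.exists_tendsto_atTop {f : ℝ → ℝ} {a m : ℝ} (hf : AntitoneOn f (Ici a))
    (hm : ∀ t ≥ a, m ≤ f t) : ∃ L ∈ Icc m (f a), Tendsto f atTop (𝓝 L) := by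
  have hg : Antitone fun t => f (max t a) := fun s t hst =>
    hf (le_max_right s a) (le_max_right t a) (max_le_max_right a hst)
  have hbdd : BddBelow (range fun t => f (max t a)) :=
    ⟨m, by rintro _ ⟨t, rfl⟩; exact hm _ (le_max_right t a)⟩
  refine ⟨_, ⟨le_ciInf fun t => hm _ (le_max_right t a), ?_⟩,
    (tendsto_atTop_ciInf hg hbdd).congr' ?_⟩
  · simpa using ciInf_le hbdd a
  · filter_upwards [eventually_ge_atTop a] with t ht
    rw [max_eq_left ht]

theorem tendsto_atBot_of_hasDerivWithinAt_le {f f' : ℝ → ℝ} {a c : ℝ} (hc : c < 0)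
    (hf : ∀ t ≥ a, HasDerivWithinAt f (f' t) (Ici a) t) (hf' : ∀ t ≥ a, f' t ≤ c) :
    Tendsto f atTop atBot := by
  have hanti : AntitoneOn (fun t => f t - c * t) (Ici a) := by
    refine antitoneOn_of_hasDerivWithinAt_nonpos (convex_Ici a)
      (fun t ht => (hf t ht).continuousWithinAt.sub (continuous_const_mul c).continuousWithinAt)
      (f' := fun t => f' t - c * 1) (fun t ht => ?_) (fun t ht => ?_)
    · rw [interior_Ici] at ht ⊢
      exact ((hf t ht.le).mono Ioi_subset_Ici_self).sub ((hasDerivWithinAt_id t _).const_mul c)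
    · rw [interior_Ici] at ht
      linarith [hf' t ht.le]
  refine tendsto_atBot_mono' atTop ?_
    (tendsto_atBot_add_const_left atTop (f a - c * a) (tendsto_id.const_mul_atTop_of_neg hc))
  filter_upwards [eventually_ge_atTop a] with t ht
  show f t ≤ f a - c * a + c * t
  linarith [hanti self_mem_Ici ht ht]

theorem nonneg_of_tendsto_of_hasDerivWithinAt {f f' : ℝ → ℝ} {a l ℓ : ℝ}
    (hf : ∀ t ≥ a, HasDerivWithinAt f (f' t) (Ici a) t)
    (hfl : Tendsto f atTop (𝓝 l)) (hf'ℓ : Tendsto f' atTop (𝓝 ℓ)) : 0 ≤ ℓ := by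
  by_contra! hℓ
  have hhalf : ℓ < ℓ / 2 := by linarith
  obtain ⟨T, hT⟩ := eventually_atTop.1 (hf'ℓ.eventually (eventually_lt_nhds hhalf))
  have hbot : Tendsto f atTop atBot :=
    tendsto_atBot_of_hasDerivWithinAt_le (a := max T a) (by linarith)
      (fun t ht => (hf t ((le_max_right T a).trans ht)).mono (Ici_subset_Ici.2 (le_max_right T a)))
      (fun t ht => (hT t ((le_max_left T a).trans ht)).le)
  exact not_tendsto_nhds_of_tendsto_atBot hbot l hfl

theorem eq_zero_of_tendsto_of_hasDerivWithinAt {f f' : ℝ → ℝ} {a l ℓ : ℝ}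
    (hf : ∀ t ≥ a, HasDerivWithinAt f (f' t) (Ici a) t)
    (hfl : Tendsto f atTop (𝓝 l)) (hf'ℓ : Tendsto f' atTop (𝓝 ℓ)) : ℓ = 0 := by
  have hneg : 0 ≤ -ℓ :=
    nonneg_of_tendsto_of_hasDerivWithinAt (fun t ht => (hf t ht).neg) hfl.neg hf'ℓ.neg
  linarith [nonneg_of_tendsto_of_hasDerivWithinAt hf hfl hf'ℓ]

structure IsMeanFieldSolution (β μ : ℝ) (y xc : ℝ → ℝ) : Prop where
  y_pos : ∀ t, 0 ≤ t → 0 < y t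
  xc_pos : ∀ t, 0 ≤ t → 0 < xc t
  hasDerivWithinAt_y : ∀ t, 0 ≤ t → HasDerivWithinAt y (y t * (β * xc t - μ)) (Ici 0) t
  hasDerivWithinAt_xc : ∀ t, 0 ≤ t → HasDerivWithinAt xc (-(β * y t * xc t)) (Ici 0) t

namespace IsMeanFieldSolution

variable {β μ : ℝ} {y xc : ℝ → ℝ}

theorem hasDerivWithinAt_log_xc (h : IsMeanFieldSolution β μ y xc) {t : ℝ} (ht : 0 ≤ t) :
    HasDerivWithinAt (fun s => Real.log (xc s)) (-(β * y t)) (Ici 0) t := by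
  convert (h.hasDerivWithinAt_xc t ht).log (h.xc_pos t ht).ne' using 1
  field_simp [(h.xc_pos t ht).ne']

theorem first_integral_eq (h : IsMeanFieldSolution β μ y xc) {t : ℝ} (ht : 0 ≤ t) :
    β * (y t + xc t) - μ * Real.log (xc t) = β * (y 0 + xc 0) - μ * Real.log (xc 0) := by
  have hderiv : ∀ s ∈ Ici (0 : ℝ), HasDerivWithinAt
      (fun s => β * (y s + xc s) - μ * Real.log (xc s)) 0 (Ici 0) s := by
    intro s hs
    exact ((((h.hasDerivWithinAt_y s hs).add (h.hasDerivWithinAt_xc s hs)).const_mul β).sub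
      ((h.hasDerivWithinAt_log_xc hs).const_mul μ)).congr_deriv (by ring)
  exact constant_of_has_deriv_right_zero
    (fun s hs => (hderiv s hs.1).continuousWithinAt.mono Icc_subset_Ici_self)
    (fun s hs => (hderiv s hs.1).mono (Ici_subset_Ici.2 hs.1)) t ⟨ht, le_rfl⟩

theorem antitoneOn_xc (h : IsMeanFieldSolution β μ y xc) (hβ : 0 ≤ β) :
    AntitoneOn xc (Ici 0) := by
  refine antitoneOn_of_hasDerivWithinAt_nonpos (convex_Ici 0) (f' := fun t => -(β * y t * xc t))
    (fun t ht => (h.hasDerivWithinAt_xc t ht).continuousWithinAt) (fun t ht => ?_) (fun t ht => ?_)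
  · rw [interior_Ici] at ht ⊢
    exact (h.hasDerivWithinAt_xc t ht.le).mono Ioi_subset_Ici_self
  · rw [interior_Ici] at ht
    exact neg_nonpos.2 (mul_nonneg (mul_nonneg hβ (h.y_pos t ht.le).le) (h.xc_pos t ht.le).le)

theorem exists_pos_le_xc (h : IsMeanFieldSolution β μ y xc) (hβ : 0 ≤ β) (hμ : 0 < μ) :
    ∃ m, 0 < m ∧ ∀ t ≥ 0, m ≤ xc t := by
  refine ⟨Real.exp (-(β * (y 0 + xc 0) - μ * Real.log (xc 0)) / μ), Real.exp_pos _,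
    fun t ht => ?_⟩
  rw [← Real.le_log_iff_exp_le (h.xc_pos t ht), div_le_iff₀ hμ]
  have hβyx : 0 ≤ β * (y t + xc t) := mul_nonneg hβ (add_pos (h.y_pos t ht) (h.xc_pos t ht)).le
  linarith [h.first_integral_eq ht]

theorem tendsto_y_zero_and_exists_tendsto_xc (h : IsMeanFieldSolution β μ y xc) (hβ : 0 < β)
    (hμ : 0 < μ) :
    Tendsto y atTop (𝓝 0) ∧ ∃ L ∈ Ioc 0 (xc 0),
      β * L - μ * Real.log L = β * (y 0 + xc 0) - μ * Real.log (xc 0) ∧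
      Tendsto xc atTop (𝓝 L) := by
  obtain ⟨m, hm0, hm⟩ := h.exists_pos_le_xc hβ.le hμ
  obtain ⟨L, ⟨hmL, hLx⟩, hxc⟩ := (h.antitoneOn_xc hβ.le).exists_tendsto_atTop hm
  have hL : 0 < L := hm0.trans_le hmL
  have hlog : Tendsto (fun t => Real.log (xc t)) atTop (𝓝 (Real.log L)) := hxc.log hL.ne'
  set I := β * (y 0 + xc 0) - μ * Real.log (xc 0)
  have hy : Tendsto y atTop (𝓝 ((I + μ * Real.log L) / β - L)) := by
    refine (((tendsto_const_nhds.add (hlog.const_mul μ)).div_const β).sub hxc).congr' ?_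
    filter_upwards [eventually_ge_atTop 0] with t ht
    have := h.first_integral_eq ht
    field_simp
    linarith
  have hy0 : (I + μ * Real.log L) / β - L = 0 := by
    have := eq_zero_of_tendsto_of_hasDerivWithinAt (fun t ht => h.hasDerivWithinAt_log_xc ht)
      hlog (hy.const_mul β).neg
    simpa [hβ.ne'] using this
  refine ⟨hy0 ▸ hy, L, ⟨hL, hLx⟩, ?_, hxc⟩
  field_simp at hy0
  linarith

end IsMeanFieldSolution

theorem stmt_11_general (β μ θ y₀ xc₀ : ℝ) (hβ : 0 < β) (hμ : 0 < μ) (hθ : θ = β / μ)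
    (y xc : ℝ → ℝ) (hy0 : y 0 = y₀) (hxc0 : xc 0 = xc₀)
    (hypos : ∀ t, 0 ≤ t → 0 < y t) (hxpos : ∀ t, 0 ≤ t → 0 < xc t)
    (hyd : ∀ t, 0 ≤ t → HasDerivWithinAt y (y t * (β * xc t - μ)) (Set.Ici 0) t)
    (hxd : ∀ t, 0 ≤ t → HasDerivWithinAt xc (-(β * y t * xc t)) (Set.Ici 0) t) :
    Tendsto y atTop (nhds 0) ∧
    ∃ L, L ∈ Set.Ioo 0 xc₀ ∧
      L - θ⁻¹ * Real.log L = xc₀ + y₀ - θ⁻¹ * Real.log xc₀ ∧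
      (∀ L', L' ∈ Set.Ioo 0 xc₀ →
        L' - θ⁻¹ * Real.log L' = xc₀ + y₀ - θ⁻¹ * Real.log xc₀ → L' = L) ∧
      Tendsto xc atTop (nhds L) := by
  subst hy0 hxc0
  have h : IsMeanFieldSolution β μ y xc := ⟨hypos, hxpos, hyd, hxd⟩
  obtain ⟨hy, L, ⟨hL0, hLx⟩, hLeq, hxc⟩ := h.tendsto_y_zero_and_exists_tendsto_xc hβ hμ
  have hθinv : θ⁻¹ = μ / β := by rw [hθ, inv_div]
  have hgL : L - θ⁻¹ * Real.log L = xc 0 + y 0 - θ⁻¹ * Real.log (xc 0) := by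
    rw [hθinv]
    field_simp
    linarith
  have hgx : xc 0 - θ⁻¹ * Real.log (xc 0) < L - θ⁻¹ * Real.log L := by
    linarith [hypos 0 le_rfl]
  have hLlt : L < xc 0 := hLx.lt_of_ne (by rintro rfl; exact hgx.false)
  refine ⟨hy, L, ⟨hL0, hLlt⟩, hgL, fun L' hL' hL'eq => ?_, hxc⟩
  have hθ0 : 0 ≤ θ⁻¹ := by rw [hθinv]; positivity
  exact (convexOn_sub_mul_log hθ0).injOn_of_lt (hxpos 0 le_rfl) ⟨hL'.1, hL'.2, by linarith⟩
    ⟨hL0, hLlt, hgx⟩ (hL'eq.trans hgL.symm)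

/-- Long-time behavior of the mean-field P2P ODEs: `y(t) → 0` and `x_c(t)` converges to
the unique solution in `(0, x_{c,0})` of `x − θ⁻¹ log x = x_{c,0} + y₀ − θ⁻¹ log x_{c,0}`. -/
theorem stmt_11 (β μ θ y₀ xc₀ : ℝ) (hβ : 0 < β) (hμ : 0 < μ) (hθ : θ = β / μ)
    (hy₀ : y₀ ∈ Set.Ioo (0:ℝ) 1) (hxc₀ : xc₀ ∈ Set.Ioo (0:ℝ) 1)
    (y xc : ℝ → ℝ) (hy0 : y 0 = y₀) (hxc0 : xc 0 = xc₀)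
    (hypos : ∀ t, 0 ≤ t → 0 < y t) (hxpos : ∀ t, 0 ≤ t → 0 < xc t)
    (hyd : ∀ t, 0 ≤ t → HasDerivWithinAt y (y t * (β * xc t - μ)) (Set.Ici 0) t)
    (hxd : ∀ t, 0 ≤ t → HasDerivWithinAt xc (-(β * y t * xc t)) (Set.Ici 0) t) :
    Tendsto y atTop (nhds 0) ∧
    ∃ L, L ∈ Set.Ioo 0 xc₀ ∧
      L - θ⁻¹ * Real.log L = xc₀ + y₀ - θ⁻¹ * Real.log xc₀ ∧
      (∀ L', L' ∈ Set.Ioo 0 xc₀ →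
        L' - θ⁻¹ * Real.log L' = xc₀ + y₀ - θ⁻¹ * Real.log xc₀ → L' = L) ∧
      Tendsto xc atTop (nhds L) :=
  stmt_11_general β μ θ y₀ xc₀ hβ hμ hθ y xc hy0 hxc0 hypos hxpos hyd hxd
end

section
/- Let λ > 0, μ > 0, set ξ = λ/μ, and let x₀ ∈ (0,1). Define x̃(t) = x₀·(1 − μt)^ξ and ỹ(t) = (1 − μt) − x₀·(1 − μt)^ξ for t ∈ [0, 1/μ). Then ỹ(0) = 1 − x₀, x̃(0) = x₀, x̃(t) + ỹ(t) = 1 − μt > 0 on [0, 1/μ), and the pair (ỹ, x̃) satisfies ỹ'(t) = −μ + λ·x̃(t)/(x̃(t) + ỹ(t)) and x̃'(t) = −λ·x̃(t)/(x̃(t) + ỹ(t)) for all t ∈ [0, 1/μ). -/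
/-!
Since `x̃ + ỹ = 1 - μt`, the `x̃`-equation is the linear ODE `x̃' = -λ x̃ / (1 - μt)`, solved by
`x₀ (1 - μt)^(λ/μ)` as long as `1 - μt > 0`; the `ỹ`-equation then follows from `(x̃ + ỹ)' = -μ`.
-/

open Set

theorem hasDerivAt_one_sub_mul (μ t : ℝ) : HasDerivAt (fun s => 1 - μ * s) (-μ) t := by
  simpa using ((hasDerivAt_id t).const_mul μ).const_sub 1

theorem hasDerivAt_const_mul_one_sub_mul_rpow (c μ ξ t : ℝ) (ht : 1 - μ * t ≠ 0) :
    HasDerivAt (fun s => c * (1 - μ * s) ^ ξ)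
      (-(μ * ξ * (c * (1 - μ * t) ^ ξ) / (1 - μ * t))) t := by
  refine (((hasDerivAt_one_sub_mul μ t).rpow_const (p := ξ) (Or.inl ht)).const_mul c).congr_deriv ?_
  rw [Real.rpow_sub_one ht]
  ring

theorem one_sub_mul_pos_of_lt_one_div {μ t : ℝ} (hμ : 0 < μ) (ht : t < 1 / μ) : 0 < 1 - μ * t := by
  have : μ * t < 1 := by rwa [lt_div_iff₀ hμ, mul_comm] at ht
  linarith

theorem stmt_14_general (lam μ ξ x₀ : ℝ) (hμ : 0 < μ) (hξ : ξ = lam / μ)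
    (x y : ℝ → ℝ)
    (hx : ∀ t, x t = x₀ * (1 - μ * t) ^ ξ)
    (hy : ∀ t, y t = (1 - μ * t) - x₀ * (1 - μ * t) ^ ξ) :
    y 0 = 1 - x₀ ∧ x 0 = x₀ ∧
    (∀ t ∈ Set.Ico (0:ℝ) (1 / μ), x t + y t = 1 - μ * t ∧ 0 < x t + y t) ∧
    (∀ t ∈ Set.Ico (0:ℝ) (1 / μ),
      HasDerivAt y (-μ + lam * x t / (x t + y t)) t ∧
      HasDerivAt x (-(lam * x t / (x t + y t))) t) := by
  have hsum (t : ℝ) : x t + y t = 1 - μ * t := by rw [hx, hy]; ring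
  have hx' (t : ℝ) (ht : t ∈ Ico 0 (1 / μ)) :
      HasDerivAt x (-(lam * x t / (x t + y t))) t := by
    rw [hsum, funext hx]
    convert hasDerivAt_const_mul_one_sub_mul_rpow x₀ μ ξ t
      (one_sub_mul_pos_of_lt_one_div hμ ht.2).ne' using 3
    rw [hξ, mul_div_cancel₀ _ hμ.ne']
  refine ⟨by simp [hy], by simp [hx],
    fun t ht => ⟨hsum t, hsum t ▸ one_sub_mul_pos_of_lt_one_div hμ ht.2⟩,
    fun t ht => ⟨?_, hx' t ht⟩⟩
  have hy_eq : y = (fun s => 1 - μ * s) - x := funext fun s => by simp [hy, hx]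
  have hd := ((hasDerivAt_one_sub_mul μ t).sub (hx' t ht)).congr_deriv
    (show _ = -μ + lam * x t / (x t + y t) by ring)
  rwa [← hy_eq] at hd

/-- The pair `x̃(t) = x₀(1 − μt)^ξ`, `ỹ(t) = (1 − μt) − x₀(1 − μt)^ξ` (with `ξ = λ/μ`)
solves the time-rescaled mean-field ODEs on `[0, 1/μ)` with `ỹ(0) = 1 − x₀`, `x̃(0) = x₀`. -/
theorem stmt_14 (lam μ ξ x₀ : ℝ) (hlam : 0 < lam) (hμ : 0 < μ) (hξ : ξ = lam / μ)
    (hx₀ : x₀ ∈ Set.Ioo (0:ℝ) 1)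
    (x y : ℝ → ℝ)
    (hx : ∀ t, x t = x₀ * (1 - μ * t) ^ ξ)
    (hy : ∀ t, y t = (1 - μ * t) - x₀ * (1 - μ * t) ^ ξ) :
    y 0 = 1 - x₀ ∧ x 0 = x₀ ∧
    (∀ t ∈ Set.Ico (0:ℝ) (1 / μ), x t + y t = 1 - μ * t ∧ 0 < x t + y t) ∧
    (∀ t ∈ Set.Ico (0:ℝ) (1 / μ),
      HasDerivAt y (-μ + lam * x t / (x t + y t)) t ∧
      HasDerivAt x (-(lam * x t / (x t + y t))) t) :=
  stmt_14_general lam μ ξ x₀ hμ hξ x y hx hy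
end

section
/- Let μ > 0, x₀ ∈ (0,1), ξ > 0, and define ỹ(t) = (1 − μt)·(1 − x₀·(1 − μt)^{ξ−1}) for t ∈ [0, 1/μ]. If ξ < 1, then the smallest zero of ỹ in [0, 1/μ] is τ = (1 − x₀^{1/(1−ξ)})/μ, and at that time x̃(τ) := x₀·(1 − μτ)^ξ = x₀^{1/(1−ξ)}. If ξ ≥ 1, then ỹ(t) > 0 for all t ∈ [0, 1/μ), the smallest (and only) zero of ỹ in [0, 1/μ] is τ = 1/μ, and x̃(τ) := x₀·(1 − μτ)^ξ = 0. -/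
/-!
In the variable `s = 1 - μt ∈ [0, 1]` the file fraction is `s (1 - x₀ s^(ξ-1))`, which vanishes
exactly where `s = 0` or `x₀ s^(ξ-1) = 1`. For `ξ ≥ 1` the factor `x₀ s^(ξ-1) ≤ x₀ < 1`, so only
`s = 0`, i.e. `t = 1/μ`, is a zero. For `ξ < 1` the map `s ↦ s^(ξ-1)` is decreasing, so
`x₀ s^(ξ-1) = 1` has the unique solution `s = x₀^(1/(1-ξ))`, the largest zero in `s` and hence
the earliest in `t`; there `x₀ s^ξ = s`.
-/

open Set Real

section RpowFixedPoint

variable {x ξ : ℝ}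

lemma mul_rpow_one_div_one_sub_rpow_sub_one (hx : 0 < x) (hξ : ξ ≠ 1) :
    x * (x ^ (1 / (1 - ξ))) ^ (ξ - 1) = 1 := by
  have h1ξ : 1 - ξ ≠ 0 := sub_ne_zero.2 (Ne.symm hξ)
  rw [← rpow_mul hx.le, show 1 / (1 - ξ) * (ξ - 1) = -1 by field_simp; ring, rpow_neg_one,
    mul_inv_cancel₀ hx.ne']

lemma mul_rpow_one_div_one_sub_rpow (hx : 0 < x) (hξ : ξ ≠ 1) :
    x * (x ^ (1 / (1 - ξ))) ^ ξ = x ^ (1 / (1 - ξ)) := by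
  have ha : 0 < x ^ (1 / (1 - ξ)) := rpow_pos_of_pos hx _
  calc x * (x ^ (1 / (1 - ξ))) ^ ξ = x * (x ^ (1 / (1 - ξ))) ^ (ξ - 1) * x ^ (1 / (1 - ξ)) := by
        rw [mul_assoc, ← rpow_add_one ha.ne', sub_add_cancel]
    _ = x ^ (1 / (1 - ξ)) := by rw [mul_rpow_one_div_one_sub_rpow_sub_one hx hξ, one_mul]

lemma mul_rpow_sub_one_lt_one_of_lt {s : ℝ} (hx : 0 < x) (hξ : ξ < 1)
    (hs : x ^ (1 / (1 - ξ)) < s) : x * s ^ (ξ - 1) < 1 :=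
  calc x * s ^ (ξ - 1) < x * (x ^ (1 / (1 - ξ))) ^ (ξ - 1) :=
        mul_lt_mul_of_pos_left (rpow_lt_rpow_of_neg (rpow_pos_of_pos hx _) hs (by linarith)) hx
    _ = 1 := mul_rpow_one_div_one_sub_rpow_sub_one hx hξ.ne

lemma mul_rpow_sub_one_lt_one_of_one_le {s : ℝ} (hx₀ : 0 ≤ x) (hx₁ : x < 1) (hξ : 1 ≤ ξ)
    (hs₀ : 0 ≤ s) (hs₁ : s ≤ 1) : x * s ^ (ξ - 1) < 1 :=
  calc x * s ^ (ξ - 1) ≤ x * 1 :=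
        mul_le_mul_of_nonneg_left (rpow_le_one hs₀ hs₁ (by linarith)) hx₀
    _ < 1 := by linarith

end RpowFixedPoint

section FileFraction

variable {μ x₀ ξ : ℝ} {y : ℝ → ℝ}

lemma fileFraction_isLeast_zero_of_lt_one (hμ : 0 < μ) (hx₀ : x₀ ∈ Ioo (0:ℝ) 1) (hξ : ξ < 1)
    (hy : ∀ t, y t = (1 - μ * t) * (1 - x₀ * (1 - μ * t) ^ (ξ - 1))) :
    IsLeast {t | t ∈ Icc (0:ℝ) (1 / μ) ∧ y t = 0} ((1 - x₀ ^ (1 / (1 - ξ))) / μ) := by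
  obtain ⟨hx0, hx1⟩ := hx₀
  set a := x₀ ^ (1 / (1 - ξ))
  have ha0 : 0 < a := rpow_pos_of_pos hx0 _
  have ha1 : a < 1 := rpow_lt_one hx0.le hx1 (one_div_pos.2 (by linarith))
  have hτ : 1 - μ * ((1 - a) / μ) = a := by field_simp; ring
  refine ⟨⟨⟨div_nonneg (by linarith) hμ.le, by gcongr; linarith⟩, ?_⟩, ?_⟩
  · rw [hy, hτ, mul_rpow_one_div_one_sub_rpow_sub_one hx0 hξ.ne, sub_self, mul_zero]
  · rintro t ⟨-, hyt⟩
    by_contra! hlt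
    have hs : a < 1 - μ * t := by rw [lt_div_iff₀ hμ] at hlt; linarith
    have hpos : 0 < y t := by
      rw [hy]
      exact mul_pos (ha0.trans hs) (sub_pos.2 (mul_rpow_sub_one_lt_one_of_lt hx0 hξ hs))
    exact hpos.ne' hyt

lemma fileFraction_pos_of_one_le (hμ : 0 < μ) (hx₀ : x₀ ∈ Ioo (0:ℝ) 1) (hξ : 1 ≤ ξ)
    (hy : ∀ t, y t = (1 - μ * t) * (1 - x₀ * (1 - μ * t) ^ (ξ - 1))) :
    ∀ t ∈ Ico (0:ℝ) (1 / μ), 0 < y t := by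
  rintro t ⟨ht0, ht1⟩
  have hs0 : 0 < 1 - μ * t := by rw [lt_div_iff₀ hμ] at ht1; linarith
  have hs1 : 1 - μ * t ≤ 1 := by nlinarith
  rw [hy]
  exact mul_pos hs0
    (sub_pos.2 (mul_rpow_sub_one_lt_one_of_one_le hx₀.1.le hx₀.2 hξ hs0.le hs1))

lemma fileFraction_zeros_eq_of_one_le (hμ : 0 < μ) (hx₀ : x₀ ∈ Ioo (0:ℝ) 1) (hξ : 1 ≤ ξ)
    (hy : ∀ t, y t = (1 - μ * t) * (1 - x₀ * (1 - μ * t) ^ (ξ - 1))) :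
    {t | t ∈ Icc (0:ℝ) (1 / μ) ∧ y t = 0} = {1 / μ} := by
  ext t
  constructor
  · rintro ⟨⟨ht0, ht1⟩, hyt⟩
    by_contra hne
    exact (fileFraction_pos_of_one_le hμ hx₀ hξ hy t ⟨ht0, lt_of_le_of_ne ht1 hne⟩).ne' hyt
  · rintro rfl
    refine ⟨⟨by positivity, le_rfl⟩, ?_⟩
    rw [hy, mul_one_div_cancel hμ.ne', sub_self, zero_mul]

end FileFraction

theorem stmt_15_general (μ x₀ ξ : ℝ) (hμ : 0 < μ) (hx₀ : x₀ ∈ Set.Ioo (0:ℝ) 1)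
    (y : ℝ → ℝ)
    (hy : ∀ t, y t = (1 - μ * t) * (1 - x₀ * (1 - μ * t) ^ (ξ - 1))) :
    (ξ < 1 →
      IsLeast {t | t ∈ Set.Icc (0:ℝ) (1 / μ) ∧ y t = 0} ((1 - x₀ ^ (1 / (1 - ξ))) / μ) ∧
      x₀ * (1 - μ * ((1 - x₀ ^ (1 / (1 - ξ))) / μ)) ^ ξ = x₀ ^ (1 / (1 - ξ))) ∧
    (1 ≤ ξ →
      (∀ t ∈ Set.Ico (0:ℝ) (1 / μ), 0 < y t) ∧
      {t | t ∈ Set.Icc (0:ℝ) (1 / μ) ∧ y t = 0} = {1 / μ} ∧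
      x₀ * (1 - μ * (1 / μ)) ^ ξ = 0) := by
  constructor
  · intro hξ
    refine ⟨fileFraction_isLeast_zero_of_lt_one hμ hx₀ hξ hy, ?_⟩
    rw [mul_div_cancel₀ _ hμ.ne', sub_sub_cancel, mul_rpow_one_div_one_sub_rpow hx₀.1 hξ.ne]
  · intro hξ
    refine ⟨fileFraction_pos_of_one_le hμ hx₀ hξ hy,
      fileFraction_zeros_eq_of_one_le hμ hx₀ hξ hy, ?_⟩
    rw [mul_one_div_cancel hμ.ne', sub_self, zero_rpow (by linarith), mul_zero]

/-- Phase transition at `ξ = 1` for the fraction of peers that never get the file: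
for `ỹ(t) = (1 − μt)(1 − x₀(1 − μt)^{ξ−1})`, if `ξ < 1` the smallest zero of `ỹ` in
`[0, 1/μ]` is `τ = (1 − x₀^{1/(1−ξ)})/μ` with `x̃(τ) = x₀^{1/(1−ξ)}`; if `ξ ≥ 1` then
`ỹ > 0` on `[0, 1/μ)`, the only zero is `τ = 1/μ`, and `x̃(τ) = 0`. -/
theorem stmt_15 (μ x₀ ξ : ℝ) (hμ : 0 < μ) (hx₀ : x₀ ∈ Set.Ioo (0:ℝ) 1) (hξ : 0 < ξ)
    (y : ℝ → ℝ)
    (hy : ∀ t, y t = (1 - μ * t) * (1 - x₀ * (1 - μ * t) ^ (ξ - 1))) :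
    (ξ < 1 →
      IsLeast {t | t ∈ Set.Icc (0:ℝ) (1 / μ) ∧ y t = 0} ((1 - x₀ ^ (1 / (1 - ξ))) / μ) ∧
      x₀ * (1 - μ * ((1 - x₀ ^ (1 / (1 - ξ))) / μ)) ^ ξ = x₀ ^ (1 / (1 - ξ))) ∧
    (1 ≤ ξ →
      (∀ t ∈ Set.Ico (0:ℝ) (1 / μ), 0 < y t) ∧
      {t | t ∈ Set.Icc (0:ℝ) (1 / μ) ∧ y t = 0} = {1 / μ} ∧
      x₀ * (1 - μ * (1 / μ)) ^ ξ = 0) :=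
  stmt_15_general μ x₀ ξ hμ hx₀ y hy
end

section
/- Let μ > 0, x₀ ∈ (0,1), and ξ > 1/x₀. Define ỹ(t) = (1 − μt) − x₀·(1 − μt)^ξ for t ∈ [0, 1/μ]. Then ỹ attains its maximum over [0, 1/μ] at the unique point t₁ = (1 − (ξ·x₀)^{1/(1−ξ)})/μ ∈ (0, 1/μ), and the maximum value is ỹ(t₁) = x₀^{1/(1−ξ)}·ξ^{ξ/(1−ξ)}·(ξ − 1) > 0. Moreover ỹ is increasing on [0, t₁] and decreasing on [t₁, 1/μ]. -/
/-! In the variable `s = 1 - μt ∈ [0, 1]` the curve is `g(s) = s - x₀ s^ξ`, whose derivative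
`1 - ξ x₀ s^(ξ-1)` is increasing in `s` (as `ξ > 1`) and vanishes exactly at
`s₁ = (ξ x₀)^(1/(1-ξ))`. Hence `g` rises on `[0, s₁]` and falls on `[s₁, ∞)`, and `ξ x₀ > 1`
places `s₁` inside `(0, 1)`. At `s₁` we have `x₀ s₁^ξ = s₁ / ξ`, which gives the maximum value.
Since `t ↦ 1 - μt` is decreasing, the monotonicity pattern is reversed in `t`. -/

open Set

section SubMulRpow

variable {c p : ℝ}

lemma rpow_one_div_one_sub_rpow_sub_one {a : ℝ} (ha : 0 < a) (hp : p ≠ 1) :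
    (a ^ (1 / (1 - p))) ^ (p - 1) = a⁻¹ := by
  have h : 1 - p ≠ 0 := sub_ne_zero.mpr hp.symm
  rw [← Real.rpow_mul ha.le, show 1 / (1 - p) * (p - 1) = -1 by field_simp; ring,
    Real.rpow_neg_one]

lemma hasDerivAt_sub_mul_rpow (c : ℝ) (hp : 1 ≤ p) (s : ℝ) :
    HasDerivAt (fun s : ℝ => s - c * s ^ p) (1 - p * c * s ^ (p - 1)) s :=
  ((hasDerivAt_id' s).sub ((Real.hasDerivAt_rpow_const (Or.inr hp)).const_mul c)).congr_deriv
    (by ring)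

lemma continuous_sub_mul_rpow (c : ℝ) (hp : 1 ≤ p) : Continuous fun s : ℝ => s - c * s ^ p :=
  Differentiable.continuous fun s => (hasDerivAt_sub_mul_rpow c hp s).differentiableAt

lemma strictMonoOn_sub_mul_rpow (hc : 0 < c) (hp : 1 < p) :
    StrictMonoOn (fun s : ℝ => s - c * s ^ p) (Icc 0 ((p * c) ^ (1 / (1 - p)))) := by
  have hcp : 0 < p * c := by positivity
  refine strictMonoOn_of_deriv_pos (convex_Icc _ _)
    (continuous_sub_mul_rpow c hp.le).continuousOn fun s hs => ?_
  rw [interior_Icc] at hs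
  have hpow : s ^ (p - 1) < (p * c)⁻¹ := by
    rw [← rpow_one_div_one_sub_rpow_sub_one hcp hp.ne']
    exact Real.rpow_lt_rpow hs.1.le hs.2 (by linarith)
  rw [(hasDerivAt_sub_mul_rpow c hp.le s).deriv, sub_pos]
  calc p * c * s ^ (p - 1) < p * c * (p * c)⁻¹ := by gcongr
    _ = 1 := mul_inv_cancel₀ hcp.ne'

lemma strictAntiOn_sub_mul_rpow (hc : 0 < c) (hp : 1 < p) :
    StrictAntiOn (fun s : ℝ => s - c * s ^ p) (Ici ((p * c) ^ (1 / (1 - p)))) := by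
  have hcp : 0 < p * c := by positivity
  refine strictAntiOn_of_deriv_neg (convex_Ici _)
    (continuous_sub_mul_rpow c hp.le).continuousOn fun s hs => ?_
  rw [interior_Ici] at hs
  have hpow : (p * c)⁻¹ < s ^ (p - 1) := by
    rw [← rpow_one_div_one_sub_rpow_sub_one hcp hp.ne']
    exact Real.rpow_lt_rpow (by positivity) hs (by linarith)
  rw [(hasDerivAt_sub_mul_rpow c hp.le s).deriv, sub_neg]
  calc 1 = p * c * (p * c)⁻¹ := (mul_inv_cancel₀ hcp.ne').symm
    _ < p * c * s ^ (p - 1) := by gcongr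

lemma sub_mul_rpow_at_critical_point (hc : 0 < c) (hp : 1 < p) :
    (p * c) ^ (1 / (1 - p)) - c * ((p * c) ^ (1 / (1 - p))) ^ p
      = c ^ (1 / (1 - p)) * p ^ (p / (1 - p)) * (p - 1) := by
  have hp0 : 0 < p := by linarith
  have hcp : 0 < p * c := by positivity
  have h1p : 1 - p ≠ 0 := by linarith
  set s := (p * c) ^ (1 / (1 - p)) with hs
  have hs0 : s ≠ 0 := by positivity
  have hs_pow : s ^ p = (p * c)⁻¹ * s := by
    rw [← rpow_one_div_one_sub_rpow_sub_one hcp hp.ne', ← hs, Real.rpow_sub_one hs0,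
      div_mul_cancel₀ _ hs0]
  have hp_pow : p ^ (p / (1 - p)) = p ^ (1 / (1 - p)) / p := by
    rw [show p / (1 - p) = 1 / (1 - p) - 1 by field_simp; ring, Real.rpow_sub hp0,
      Real.rpow_one]
  rw [hs_pow, hp_pow, hs, Real.mul_rpow hp0.le hc.le]
  field_simp

end SubMulRpow

lemma rpow_one_div_one_sub_mem_Ioo {a p : ℝ} (ha : 1 < a) (hp : 1 < p) :
    a ^ (1 / (1 - p)) ∈ Ioo 0 1 :=
  ⟨by positivity,
    Real.rpow_lt_one_of_one_lt_of_neg ha (div_neg_of_pos_of_neg one_pos (by linarith))⟩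

lemma StrictMonoOn.lt_of_strictAntiOn {f : ℝ → ℝ} {a m b t : ℝ}
    (hmono : StrictMonoOn f (Icc a m)) (hanti : StrictAntiOn f (Icc m b)) (ham : a ≤ m)
    (hmb : m ≤ b) (ht : t ∈ Icc a b) (hne : t ≠ m) : f t < f m := by
  rcases hne.lt_or_gt with h | h
  · exact hmono ⟨ht.1, h.le⟩ ⟨ham, le_rfl⟩ h
  · exact hanti ⟨le_rfl, hmb⟩ ⟨h.le, ht.2⟩ h

lemma mapsTo_one_sub_mul_Icc {μ : ℝ} (hμ : 0 ≤ μ) (a b : ℝ) :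
    MapsTo (fun t : ℝ => 1 - μ * t) (Icc a b) (Icc (1 - μ * b) (1 - μ * a)) :=
  fun _ ht => ⟨by nlinarith [ht.2], by nlinarith [ht.1]⟩

/-- Maximum torrent size when `ξ > 1/x₀`: `ỹ(t) = (1 − μt) − x₀(1 − μt)^ξ` attains its
maximum over `[0, 1/μ]` at the unique point `t₁ = (1 − (ξx₀)^{1/(1−ξ)})/μ ∈ (0, 1/μ)`,
with maximum value `x₀^{1/(1−ξ)} ξ^{ξ/(1−ξ)} (ξ − 1) > 0`; `ỹ` is increasing on `[0, t₁]`
and decreasing on `[t₁, 1/μ]`. -/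
theorem stmt_16 (μ x₀ ξ : ℝ) (hμ : 0 < μ) (hx₀ : x₀ ∈ Set.Ioo (0:ℝ) 1)
    (hξ : 1 / x₀ < ξ)
    (y : ℝ → ℝ) (hy : ∀ t, y t = (1 - μ * t) - x₀ * (1 - μ * t) ^ ξ)
    (t₁ : ℝ) (ht₁ : t₁ = (1 - (ξ * x₀) ^ (1 / (1 - ξ))) / μ) :
    t₁ ∈ Set.Ioo 0 (1 / μ) ∧
    (∀ t ∈ Set.Icc (0:ℝ) (1 / μ), t ≠ t₁ → y t < y t₁) ∧
    y t₁ = x₀ ^ (1 / (1 - ξ)) * ξ ^ (ξ / (1 - ξ)) * (ξ - 1) ∧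
    0 < x₀ ^ (1 / (1 - ξ)) * ξ ^ (ξ / (1 - ξ)) * (ξ - 1) ∧
    StrictMonoOn y (Set.Icc 0 t₁) ∧
    StrictAntiOn y (Set.Icc t₁ (1 / μ)) := by
  obtain ⟨hx0, hx1⟩ := hx₀
  have hξx : 1 < ξ * x₀ := by rwa [div_lt_iff₀ hx0] at hξ
  have hξ1 : 1 < ξ := lt_trans (one_lt_one_div hx0 hx1) hξ
  have hyg : y = (fun s : ℝ => s - x₀ * s ^ ξ) ∘ fun t => 1 - μ * t := funext hy
  set s₁ := (ξ * x₀) ^ (1 / (1 - ξ))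
  have hs₁ : s₁ ∈ Ioo 0 1 := rpow_one_div_one_sub_mem_Ioo hξx hξ1
  have hs₁t₁ : 1 - μ * t₁ = s₁ := by rw [ht₁]; field_simp; ring
  have ht₁mem : t₁ ∈ Ioo 0 (1 / μ) := by
    rw [ht₁]
    exact ⟨div_pos (by linarith [hs₁.2]) hμ,
      div_lt_div_of_pos_right (by linarith [hs₁.1]) hμ⟩
  have hline : StrictAnti fun t : ℝ => 1 - μ * t := fun a b hab => by nlinarith
  have hmono : StrictMonoOn y (Icc 0 t₁) := by
    have hmaps := mapsTo_one_sub_mul_Icc hμ.le 0 t₁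
    rw [hs₁t₁, mul_zero, sub_zero] at hmaps
    rw [hyg]
    exact (strictAntiOn_sub_mul_rpow hx0 hξ1).comp (hline.strictAntiOn _)
      (hmaps.mono_right Icc_subset_Ici_self)
  have hanti : StrictAntiOn y (Icc t₁ (1 / μ)) := by
    have hmaps := mapsTo_one_sub_mul_Icc hμ.le t₁ (1 / μ)
    rw [hs₁t₁, mul_one_div_cancel hμ.ne', sub_self] at hmaps
    rw [hyg]
    exact (strictMonoOn_sub_mul_rpow hx0 hξ1).comp_strictAntiOn (hline.strictAntiOn _) hmaps
  refine ⟨ht₁mem, fun t => hmono.lt_of_strictAntiOn hanti ht₁mem.1.le ht₁mem.2.le, ?_,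
    by positivity, hmono, hanti⟩
  rw [hy, hs₁t₁]
  exact sub_mul_rpow_at_critical_point hx0 hξ1
end
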